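/- arXiv:2309.00283 — 5 statements merged into one kernel-verified Lean document; each statement's English description precedes it below -/
import Mathlib

section
/- The space of derivations Der(K_N) has complex dimension N + N², with a basis given by the derivations ∂_k (k = 1,…,N) and ∂_k^l (k, l = 1,…,N). -/
open Complex BigOperators

/-- The generalized Kronecker algebra `K_N`: elements `λ•1 + μ•e + ∑ aⁱ αᵢ`
represented by their coefficients. -/
@[ext] structure Kron (N : ℕ) where
  lam : ℂ
  mu : ℂ
  al : Fin N → ℂ

namespace Kron

variable {N : ℕ}

instance : Zero (Kron N) := ⟨⟨0, 0, fun _ => 0⟩⟩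
instance : One (Kron N) := ⟨⟨1, 0, fun _ => 0⟩⟩
instance : Add (Kron N) := ⟨fun x y => ⟨x.lam + y.lam, x.mu + y.mu, fun i => x.al i + y.al i⟩⟩
instance : Neg (Kron N) := ⟨fun x => ⟨-x.lam, -x.mu, fun i => -x.al i⟩⟩
instance : Mul (Kron N) :=
  ⟨fun x y => ⟨x.lam * y.lam, x.lam * y.mu + y.lam * x.mu + x.mu * y.mu,
    fun i => (x.lam + x.mu) * y.al i + y.lam * x.al i⟩⟩
instance : SMul ℂ (Kron N) := ⟨fun c x => ⟨c * x.lam, c * x.mu, fun i => c * x.al i⟩⟩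

@[simp] lemma mk_lam (l m : ℂ) (v : Fin N → ℂ) : (Kron.mk l m v).lam = l := rfl
@[simp] lemma mk_mu (l m : ℂ) (v : Fin N → ℂ) : (Kron.mk l m v).mu = m := rfl
@[simp] lemma mk_al (l m : ℂ) (v : Fin N → ℂ) (i : Fin N) : (Kron.mk l m v).al i = v i := rfl
@[simp] lemma zero_lam : (0 : Kron N).lam = 0 := rfl
@[simp] lemma zero_mu : (0 : Kron N).mu = 0 := rfl
@[simp] lemma zero_al (i : Fin N) : (0 : Kron N).al i = 0 := rfl
@[simp] lemma one_lam : (1 : Kron N).lam = 1 := rfl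
@[simp] lemma one_mu : (1 : Kron N).mu = 0 := rfl
@[simp] lemma one_al (i : Fin N) : (1 : Kron N).al i = 0 := rfl
@[simp] lemma add_lam (x y : Kron N) : (x + y).lam = x.lam + y.lam := rfl
@[simp] lemma add_mu (x y : Kron N) : (x + y).mu = x.mu + y.mu := rfl
@[simp] lemma add_al (x y : Kron N) (i : Fin N) : (x + y).al i = x.al i + y.al i := rfl
@[simp] lemma neg_lam (x : Kron N) : (-x).lam = -x.lam := rfl
@[simp] lemma neg_mu (x : Kron N) : (-x).mu = -x.mu := rfl
@[simp] lemma neg_al (x : Kron N) (i : Fin N) : (-x).al i = -x.al i := rfl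
@[simp] lemma mul_lam (x y : Kron N) : (x * y).lam = x.lam * y.lam := rfl
@[simp] lemma mul_mu (x y : Kron N) :
    (x * y).mu = x.lam * y.mu + y.lam * x.mu + x.mu * y.mu := rfl
@[simp] lemma mul_al (x y : Kron N) (i : Fin N) :
    (x * y).al i = (x.lam + x.mu) * y.al i + y.lam * x.al i := rfl
@[simp] lemma smul_lam (c : ℂ) (x : Kron N) : (c • x).lam = c * x.lam := rfl
@[simp] lemma smul_mu (c : ℂ) (x : Kron N) : (c • x).mu = c * x.mu := rfl
@[simp] lemma smul_al (c : ℂ) (x : Kron N) (i : Fin N) : (c • x).al i = c * x.al i := rfl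

instance : AddCommGroup (Kron N) where
  add_assoc := by intros; ext <;> simp <;> ring
  zero_add := by intros; ext <;> simp
  add_zero := by intros; ext <;> simp
  add_comm := by intros; ext <;> simp <;> ring
  neg_add_cancel := by intros; ext <;> simp
  nsmul := nsmulRec
  zsmul := zsmulRec

instance : Ring (Kron N) :=
  { (inferInstance : AddCommGroup (Kron N)) with
    left_distrib := by intros; ext <;> simp <;> ring
    right_distrib := by intros; ext <;> simp <;> ring
    zero_mul := by intros; ext <;> simp
    mul_zero := by intros; ext <;> simp
    mul_assoc := by intros; ext <;> simp <;> ring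
    one_mul := by intros; ext <;> simp
    mul_one := by intros; ext <;> simp }

instance : Module ℂ (Kron N) where
  one_smul := by intros; ext <;> simp
  mul_smul := by intros; ext <;> simp <;> ring
  smul_zero := by intros; ext <;> simp
  smul_add := by intros; ext <;> simp <;> ring
  add_smul := by intros; ext <;> simp <;> ring
  zero_smul := by intros; ext <;> simp

instance : Algebra ℂ (Kron N) :=
  Algebra.ofModule (fun _ _ _ => by ext <;> simp <;> ring)
    (fun _ _ _ => by ext <;> simp <;> ring)

/-- The idempotent generator `e`. -/
def e : Kron N := ⟨0, 1, fun _ => 0⟩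

/-- The arrow generators `α i`. -/
def α (i : Fin N) : Kron N := ⟨0, 0, fun j => if j = i then 1 else 0⟩

@[simp] lemma e_lam : (e : Kron N).lam = 0 := rfl
@[simp] lemma e_mu : (e : Kron N).mu = 1 := rfl
@[simp] lemma e_al (i : Fin N) : (e : Kron N).al i = 0 := rfl
@[simp] lemma α_lam (i : Fin N) : (α i : Kron N).lam = 0 := rfl
@[simp] lemma α_mu (i : Fin N) : (α i : Kron N).mu = 0 := rfl
@[simp] lemma α_al (i j : Fin N) : (α i : Kron N).al j = if j = i then 1 else 0 := rfl

/-- The `*`-structure: `(λ1 + μe + aⁱαᵢ)* = (λ̄+μ̄)1 − μ̄e + āⁱαᵢ`. -/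
instance : Star (Kron N) :=
  ⟨fun x => ⟨starRingEnd ℂ x.lam + starRingEnd ℂ x.mu, -(starRingEnd ℂ x.mu),
    fun i => starRingEnd ℂ (x.al i)⟩⟩

@[simp] lemma star_lam (x : Kron N) :
    (star x).lam = starRingEnd ℂ x.lam + starRingEnd ℂ x.mu := rfl
@[simp] lemma star_mu (x : Kron N) : (star x).mu = -(starRingEnd ℂ x.mu) := rfl
@[simp] lemma star_al (x : Kron N) (i : Fin N) : (star x).al i = starRingEnd ℂ (x.al i) := rfl

/-- The derivation `∂_k` with `∂_k e = i α_k`, `∂_k α_l = 0`. -/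
def dK (k : Fin N) : Kron N →ₗ[ℂ] Kron N where
  toFun x := ⟨0, 0, fun j => x.mu * Complex.I * (if j = k then 1 else 0)⟩
  map_add' := by intros; ext <;> simp <;> (try split) <;> ring
  map_smul' := by intros; ext <;> simp <;> (try split) <;> ring

/-- The derivation `∂_k^l` with `∂_k^l e = 0`, `∂_k^l α_j = δ_j^l α_k`. -/
def dKK (k l : Fin N) : Kron N →ₗ[ℂ] Kron N where
  toFun x := ⟨0, 0, fun j => x.al l * (if j = k then 1 else 0)⟩
  map_add' := by intros; ext <;> simp <;> (try split) <;> ring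
  map_smul' := by intros; ext <;> simp <;> (try split) <;> ring

end Kron


/-! A derivation `δ` kills `1`, and the relations `e² = e`, `e αᵢ = αᵢ`, `αᵢ e = 0` force `δ e` and
`δ αᵢ` into the radical `span {α_k}`. As `1, e, αᵢ` span `K_N`, `δ` is determined by the `N + N²`
coordinates of `δ e` and `δ α_l`, namely `δ = ∑ -i (δ e)_k ∂_k + ∑ (δ α_l)_k ∂_k^l`. Evaluating a
linear relation among the `∂`'s at `e` and at `α_l` shows that they are independent. -/

/-- Mathlib's `Derivation` requires a commutative algebra, while `K_N` is not commutative. -/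
def leibnizSubmodule (R A : Type*) [CommSemiring R] [Semiring A] [Algebra R A] :
    Submodule R (A →ₗ[R] A) where
  carrier := {δ | ∀ x y : A, δ (x * y) = δ x * y + x * δ y}
  zero_mem' := by simp
  add_mem' {f g} hf hg x y := by
    simp only [LinearMap.add_apply, hf x y, hg x y, add_mul, mul_add]
    abel
  smul_mem' c f hf x y := by
    simp only [LinearMap.smul_apply, hf x y, smul_add, smul_mul_assoc, mul_smul_comm]

lemma map_one_eq_zero_of_mem_leibnizSubmodule {R A : Type*} [CommSemiring R] [Ring A]
    [Algebra R A] {δ : A →ₗ[R] A} (hδ : δ ∈ leibnizSubmodule R A) : δ 1 = 0 := by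
  have h := hδ 1 1
  rwa [mul_one, mul_one, one_mul, left_eq_add] at h

namespace Kron

variable {N : ℕ}

lemma lam_sum {ι : Type*} (s : Finset ι) (f : ι → Kron N) :
    (∑ i ∈ s, f i).lam = ∑ i ∈ s, (f i).lam :=
  map_sum (AddMonoidHom.mk' lam fun _ _ => rfl) f s

lemma mu_sum {ι : Type*} (s : Finset ι) (f : ι → Kron N) :
    (∑ i ∈ s, f i).mu = ∑ i ∈ s, (f i).mu :=
  map_sum (AddMonoidHom.mk' mu fun _ _ => rfl) f s

lemma al_sum {ι : Type*} (s : Finset ι) (f : ι → Kron N) (j : Fin N) :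
    (∑ i ∈ s, f i).al j = ∑ i ∈ s, (f i).al j :=
  map_sum (AddMonoidHom.mk' (fun x : Kron N => x.al j) fun _ _ => rfl) f s

@[simp] lemma mk_zero_zero_zero : (⟨0, 0, fun _ => 0⟩ : Kron N) = 0 := rfl

lemma eq_lam_smul_one_add_mu_smul_e_add_sum (x : Kron N) :
    x = x.lam • 1 + x.mu • e + ∑ i, x.al i • α i := by
  ext j
  · simp [lam_sum]
  · simp [mu_sum]
  · simp [al_sum, mul_ite]

lemma linearMap_ext {M : Type*} [AddCommGroup M] [Module ℂ M] {f g : Kron N →ₗ[ℂ] M}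
    (h1 : f 1 = g 1) (he : f e = g e) (hα : ∀ i, f (α i) = g (α i)) : f = g := by
  ext x
  rw [eq_lam_smul_one_add_mu_smul_e_add_sum x]
  simp [map_sum, h1, he, hα]

lemma e_mul_e : (e : Kron N) * e = e := by ext <;> simp

lemma e_mul_α (i : Fin N) : (e : Kron N) * α i = α i := by ext <;> simp

lemma α_mul_e (i : Fin N) : (α i : Kron N) * e = 0 := by ext <;> simp

@[simp] lemma dK_apply (k : Fin N) (x : Kron N) :
    dK k x = ⟨0, 0, fun j => x.mu * I * (if j = k then 1 else 0)⟩ := rfl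

@[simp] lemma dKK_apply (k l : Fin N) (x : Kron N) :
    dKK k l x = ⟨0, 0, fun j => x.al l * (if j = k then 1 else 0)⟩ := rfl

lemma dK_mem_leibnizSubmodule (k : Fin N) : dK k ∈ leibnizSubmodule ℂ (Kron N) := by
  intro x y
  ext j <;> simp
  split_ifs <;> ring

lemma dKK_mem_leibnizSubmodule (k l : Fin N) : dKK k l ∈ leibnizSubmodule ℂ (Kron N) := by
  intro x y
  ext j <;> simp
  split_ifs <;> ring

def derivationFamily (N : ℕ) : Fin N ⊕ Fin N × Fin N → (Kron N →ₗ[ℂ] Kron N) :=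
  Sum.elim dK fun p => dKK p.1 p.2

lemma linearIndependent_derivationFamily : LinearIndependent ℂ (derivationFamily N) := by
  rw [Fintype.linearIndependent_iff]
  intro g hg i
  have hg_apply (x : Kron N) (j : Fin N) :
      ∑ i, g i * (derivationFamily N i x).al j = 0 := by
    simpa [LinearMap.sum_apply, al_sum] using congrArg (fun δ => (δ x).al j) hg
  rcases i with k | ⟨k, l⟩
  · simpa [derivationFamily, Fintype.sum_sum_type, I_ne_zero] using hg_apply e k
  · simpa [derivationFamily, Fintype.sum_sum_type, Fintype.sum_prod_type] using hg_apply (α l) k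

section Derivation

variable {δ : Kron N →ₗ[ℂ] Kron N}

lemma lam_map_e_eq_zero_and_mu_map_e_eq_zero (hδ : δ ∈ leibnizSubmodule ℂ (Kron N)) :
    (δ e).lam = 0 ∧ (δ e).mu = 0 := by
  have h := hδ e e
  rw [e_mul_e] at h
  have hl : (δ e).lam = 0 := by simpa using congrArg lam h
  have hm := congrArg mu h
  simp [hl] at hm
  exact ⟨hl, by linear_combination hm⟩

lemma lam_map_α_eq_zero_and_mu_map_α_eq_zero (hδ : δ ∈ leibnizSubmodule ℂ (Kron N))
    (i : Fin N) :
    (δ (α i)).lam = 0 ∧ (δ (α i)).mu = 0 := by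
  have hl : (δ (α i)).lam = 0 := by
    simpa [e_mul_α] using congrArg lam (hδ e (α i))
  have hm := congrArg mu (hδ (α i) e)
  simp [α_mul_e, hl, (lam_map_e_eq_zero_and_mu_map_e_eq_zero hδ).1] at hm
  exact ⟨hl, hm.symm⟩

lemma eq_sum_derivationFamily (hδ : δ ∈ leibnizSubmodule ℂ (Kron N)) :
    δ = ∑ k, (-I * (δ e).al k) • dK k +
      ∑ p : Fin N × Fin N, (δ (α p.2)).al p.1 • dKK p.1 p.2 := by
  obtain ⟨hel, hem⟩ := lam_map_e_eq_zero_and_mu_map_e_eq_zero hδ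
  apply linearMap_ext
  · simp [map_one_eq_zero_of_mem_leibnizSubmodule hδ]
  · ext j
    · simp [lam_sum, hel]
    · simp [mu_sum, hem]
    · simp [al_sum, Fintype.sum_prod_type]
      linear_combination (δ e).al j * I_sq
  · intro i
    obtain ⟨hl, hm⟩ := lam_map_α_eq_zero_and_mu_map_α_eq_zero hδ i
    ext j
    · simp [lam_sum, hl]
    · simp [mu_sum, hm]
    · simp [al_sum, Fintype.sum_prod_type]

end Derivation

lemma span_derivationFamily :
    Submodule.span ℂ (Set.range (derivationFamily N)) = leibnizSubmodule ℂ (Kron N) := by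
  refine le_antisymm (Submodule.span_le.2 (Set.range_subset_iff.2 ?_)) fun δ hδ => ?_
  · rintro (k | ⟨k, l⟩)
    exacts [dK_mem_leibnizSubmodule k, dKK_mem_leibnizSubmodule k l]
  · rw [eq_sum_derivationFamily hδ]
    refine add_mem (sum_mem fun k _ => ?_) (sum_mem fun p _ => ?_) <;>
      refine Submodule.smul_mem _ _ (Submodule.subset_span ?_)
    exacts [⟨Sum.inl k, rfl⟩, ⟨Sum.inr p, rfl⟩]

lemma finrank_span_derivationFamily :
    Module.finrank ℂ (Submodule.span ℂ (Set.range (derivationFamily N))) = N + N ^ 2 := by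
  rw [finrank_span_eq_card linearIndependent_derivationFamily, Fintype.card_sum,
    Fintype.card_prod, Fintype.card_fin, sq]

end Kron

/-- `Der(K_N)` has dimension `N + N²`, with basis `{∂_k} ∪ {∂_k^l}`. -/
theorem stmt_6 (N : ℕ) :
    LinearIndependent ℂ
      (Sum.elim Kron.dK (fun p : Fin N × Fin N => Kron.dKK p.1 p.2)) ∧
    (Submodule.span ℂ
        (Set.range (Sum.elim Kron.dK (fun p : Fin N × Fin N => Kron.dKK p.1 p.2))) :
        Set (Kron N →ₗ[ℂ] Kron N)) =
      {δ : Kron N →ₗ[ℂ] Kron N | ∀ x y : Kron N, δ (x * y) = δ x * y + x * δ y} ∧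
    Module.finrank ℂ
      (Submodule.span ℂ
        (Set.range (Sum.elim Kron.dK (fun p : Fin N × Fin N => Kron.dKK p.1 p.2)))) =
      N + N ^ 2 :=
  ⟨Kron.linearIndependent_derivationFamily, congrArg SetLike.coe Kron.span_derivationFamily,
    Kron.finrank_span_derivationFamily⟩
end

section
/- A C-linear functional τ : K_N → C is a trace (i.e., τ(ab) = τ(ba) and τ(a*) = conjugate of τ(a)) if and only if τ(α_i) = 0 for all i and there exist real numbers τ_0, τ_1 such that τ(1) = τ_0 and τ(e) = τ_0/2 + iτ_1. -/
open Complex BigOperators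

lemma Kron.sum_lam {N : ℕ} {ι : Type*} (s : Finset ι) (f : ι → Kron N) :
    (∑ i ∈ s, f i).lam = ∑ i ∈ s, (f i).lam := by
  classical
  induction s using Finset.cons_induction with
  | empty => simp
  | cons a s h ih => rw [Finset.sum_cons, Finset.sum_cons, Kron.add_lam, ih]

lemma Kron.sum_mu {N : ℕ} {ι : Type*} (s : Finset ι) (f : ι → Kron N) :
    (∑ i ∈ s, f i).mu = ∑ i ∈ s, (f i).mu := by
  classical
  induction s using Finset.cons_induction with
  | empty => simp
  | cons a s h ih => rw [Finset.sum_cons, Finset.sum_cons, Kron.add_mu, ih]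

lemma Kron.sum_al {N : ℕ} {ι : Type*} (s : Finset ι) (f : ι → Kron N) (j : Fin N) :
    (∑ i ∈ s, f i).al j = ∑ i ∈ s, (f i).al j := by
  classical
  induction s using Finset.cons_induction with
  | empty => simp
  | cons a s h ih => rw [Finset.sum_cons, Finset.sum_cons, Kron.add_al, ih]

lemma Kron.decomp {N : ℕ} (a : Kron N) :
    a = a.lam • (1 : Kron N) + a.mu • Kron.e + ∑ i, a.al i • Kron.α i := by
  ext j
  · simp [Kron.sum_lam]
  · simp [Kron.sum_mu]
  · simp [Kron.sum_al]

lemma Kron.tau_eval {N : ℕ} (τ : Kron N →ₗ[ℂ] ℂ) (h : ∀ i, τ (Kron.α i) = 0)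
    (a : Kron N) : τ a = a.lam * τ 1 + a.mu * τ Kron.e := by
  conv_lhs => rw [Kron.decomp a]
  simp [h, smul_eq_mul]

/-- classification of traces on `K_N`. -/
theorem stmt_9 (N : ℕ) (τ : Kron N →ₗ[ℂ] ℂ) :
    ((∀ a b : Kron N, τ (a * b) = τ (b * a)) ∧
     (∀ a : Kron N, τ (star a) = starRingEnd ℂ (τ a))) ↔
    ((∀ i, τ (Kron.α i) = 0) ∧
     ∃ t0 t1 : ℝ, τ 1 = (t0 : ℂ) ∧ τ Kron.e = (t0 : ℂ) / 2 + (t1 : ℂ) * Complex.I) := by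
  constructor
  · rintro ⟨htr, hst⟩
    have hα : ∀ i, τ (Kron.α i) = 0 := by
      intro i
      have h1 : τ (Kron.e * Kron.α i) = τ (Kron.α i * Kron.e) := htr _ _
      have he : Kron.e * Kron.α i = Kron.α i := by ext <;> simp
      have he2 : (Kron.α i) * Kron.e = 0 := by ext <;> simp
      rw [he, he2, map_zero] at h1
      exact h1
    refine ⟨hα, ?_⟩
    have h1 : τ (star (1 : Kron N)) = starRingEnd ℂ (τ 1) := hst 1
    have hs1 : star (1 : Kron N) = 1 := by ext <;> simp
    rw [hs1] at h1
    have h1real : (τ 1).im = 0 := by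
      have := congrArg Complex.im h1
      simp [Complex.conj_im] at this
      linarith
    have h2 : τ (star Kron.e) = starRingEnd ℂ (τ Kron.e) := hst Kron.e
    have hse : star (Kron.e : Kron N) = 1 - Kron.e := by
      ext <;> simp [sub_eq_add_neg]
    rw [hse, map_sub] at h2
    refine ⟨(τ 1).re, (τ Kron.e).im, ?_, ?_⟩
    · exact (Complex.ext (by simp) (by simp [h1real])).symm
    · have := congrArg Complex.re h2
      simp [Complex.sub_re, Complex.conj_re] at this
      apply Complex.ext
      · simp [Complex.add_re, Complex.div_re, Complex.mul_re]
        linarith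
      · simp [Complex.add_im, Complex.div_im, Complex.mul_im]
  · rintro ⟨hα, t0, t1, h1, he⟩
    constructor
    · intro a b
      rw [Kron.tau_eval τ hα (a * b), Kron.tau_eval τ hα (b * a)]
      simp
      ring
    · intro a
      rw [Kron.tau_eval τ hα (star a), Kron.tau_eval τ hα a]
      simp only [Kron.star_lam, Kron.star_mu, h1, he, map_add, map_mul, map_neg,
        Complex.conj_ofReal, map_div₀, map_ofNat, Complex.conj_I]
      ring
end

section
/- If τ is a trace on K_N that is positive, i.e., τ(a* a) ≥ 0 (meaning τ(a*a) is a nonnegative real number) for all a ∈ K_N, then τ = 0. -/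
open Complex BigOperators

/-- a positive trace on `K_N` vanishes identically. -/
theorem stmt_10 (N : ℕ) (τ : Kron N →ₗ[ℂ] ℂ)
    (htr : ∀ a b : Kron N, τ (a * b) = τ (b * a))
    (hstar : ∀ a : Kron N, τ (star a) = starRingEnd ℂ (τ a))
    (hpos : ∀ a : Kron N, ∃ r : ℝ, 0 ≤ r ∧ τ (star a * a) = (r : ℂ)) :
    τ = 0 := by
  classical
  have sum_lam : ∀ (f : Fin N → Kron N), (∑ i, f i).lam = ∑ i, (f i).lam := by
    intro f
    exact map_sum (⟨⟨Kron.lam, rfl⟩, fun _ _ => rfl⟩ : Kron N →+ ℂ) f Finset.univ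
  have sum_mu : ∀ (f : Fin N → Kron N), (∑ i, f i).mu = ∑ i, (f i).mu := by
    intro f
    exact map_sum (⟨⟨Kron.mu, rfl⟩, fun _ _ => rfl⟩ : Kron N →+ ℂ) f Finset.univ
  have sum_al : ∀ (f : Fin N → Kron N) (j : Fin N),
      (∑ i, f i).al j = ∑ i, (f i).al j := by
    intro f j
    exact map_sum (⟨⟨fun x => Kron.al x j, rfl⟩, fun _ _ => rfl⟩ : Kron N →+ ℂ) f Finset.univ
  have hdec : ∀ x : Kron N, x = x.lam • 1 + x.mu • Kron.e + ∑ i, x.al i • Kron.α i := by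
    intro x
    ext j
    · simp [sum_lam]
    · simp [sum_mu]
    · simp [sum_al, mul_ite, Finset.sum_ite_eq]
  have hα : ∀ k : Fin N, τ (Kron.α k) = 0 := by
    intro k
    have h := htr Kron.e (Kron.α k)
    have h1 : Kron.e * Kron.α k = Kron.α k := by ext <;> simp
    have h2 : Kron.α k * Kron.e = (0 : Kron N) := by ext <;> simp
    rw [h1, h2, map_zero] at h
    exact h
  have tau_eq : ∀ x : Kron N, τ x = x.lam * τ 1 + x.mu * τ Kron.e := by
    intro x
    conv_lhs => rw [hdec x]
    simp [map_add, map_smul, map_sum, hα]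
  have key : ∀ t : ℂ, ∃ r : ℝ, 0 ≤ r ∧
      (1 + starRingEnd ℂ t) * τ 1 + (t - starRingEnd ℂ t) * τ Kron.e = (r : ℂ) := by
    intro t
    obtain ⟨r, hr, hval⟩ := hpos (Kron.mk 1 t (fun _ => 0))
    rw [tau_eq] at hval
    simp only [Kron.mul_lam, Kron.mul_mu, Kron.star_lam, Kron.star_mu, Kron.mk_lam,
      Kron.mk_mu, map_one] at hval
    refine ⟨r, hr, ?_⟩
    rw [← hval]
    ring
  obtain ⟨r0, hr0, h0⟩ := key 0
  obtain ⟨r1, hr1, h1⟩ := key (-2)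
  obtain ⟨r2, hr2, h2⟩ := key Complex.I
  obtain ⟨r3, hr3, h3⟩ := key (-Complex.I)
  simp [Complex.conj_I, map_ofNat] at h0 h1 h2 h3
  have hrr : r0 = -r1 := by
    have : (r0 : ℂ) = -(r1 : ℂ) := by rw [← h0]; linear_combination -h1
    exact_mod_cast this
  have hr0' : r0 = 0 := by linarith
  have hT : τ 1 = 0 := by rw [h0, hr0']; norm_num
  rw [hT] at h2 h3
  have hrr2 : r2 = -r3 := by
    have : (r2 : ℂ) = -(r3 : ℂ) := by rw [← h2]; linear_combination -h3
    exact_mod_cast this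
  have hr2' : r2 = 0 := by linarith
  have hE : τ Kron.e = 0 := by
    have h2' := h2
    rw [hr2'] at h2'
    have : (2 * Complex.I) * τ Kron.e = 0 := by push_cast at h2'; linear_combination h2'
    have h2I : (2 * Complex.I) ≠ 0 := by simp [Complex.I_ne_zero]
    exact (mul_eq_zero.mp this).resolve_left h2I
  ext x
  rw [tau_eq, hT, hE]
  simp
end

section
/- In the noncommutative torus T²_θ with irrational θ, the closed 1-forms in the restricted derivation-based calculus modulo exact 1-forms form a 2-dimensional complex vector space: a 1-form ρ = aω + bη with a = Σ a_{kl}U^kV^l, b = Σ b_{kl}U^kV^l is closed if and only if k·b_{kl} = l·a_{kl} for all k, l ∈ Z, and H¹ ≅ C² is represented by {λω + μη : λ, μ ∈ C}. -/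
/-!
Both derivations act diagonally on the monomials `UᵏVˡ`, with eigenvalues `ik` and `il`.
Transported along the injective Fourier map `Φ`, the closedness condition `∂₁b = ∂₂a`
becomes the coefficientwise identity `k b_{kl} = l a_{kl}`, and a closed form is exact up
to its constant term: `c_{kl} = a_{kl}/(ik)` for `k ≠ 0` and `c_{0l} = b_{0l}/(il)` for
`l ≠ 0` is a primitive of `ρ - a₀₀ω - b₀₀η`. The constant terms are the only invariants,
since every derivative of a monomial has vanishing `(0,0)`-coefficient.
-/

open Complex

section Leibniz

variable {R A : Type*} [CommRing R] [Ring A] [Algebra R A] {d : A →ₗ[R] A}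

theorem map_one_eq_zero_of_leibniz (hd : ∀ x y : A, d (x * y) = d x * y + x * d y) :
    d 1 = 0 := by
  simpa using hd 1 1

theorem map_mul_of_eigen (hd : ∀ x y : A, d (x * y) = d x * y + x * d y) {x y : A} {α β : R}
    (hx : d x = α • x) (hy : d y = β • y) : d (x * y) = (α + β) • (x * y) := by
  rw [hd, hx, hy, smul_mul_assoc, mul_smul_comm, add_smul]

theorem map_pow_of_eigen (hd : ∀ x y : A, d (x * y) = d x * y + x * d y) {x : A} {α : R}
    (hx : d x = α • x) (n : ℕ) : d (x ^ n) = (n * α) • x ^ n := by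
  induction n with
  | zero => simpa using map_one_eq_zero_of_leibniz hd
  | succ n ih => rw [pow_succ, map_mul_of_eigen hd ih hx]; push_cast; ring_nf

theorem map_inv_of_eigen (hd : ∀ x y : A, d (x * y) = d x * y + x * d y) {u : Aˣ} {α : R}
    (hu : d u = α • (u : A)) : d ↑u⁻¹ = (-α) • (↑u⁻¹ : A) := by
  have h : d ↑u⁻¹ * u + α • (1 : A) = 0 := by
    rw [← map_one_eq_zero_of_leibniz hd, ← u.inv_mul, hd, hu, mul_smul_comm, u.inv_mul]
  calc d ↑u⁻¹ = d ↑u⁻¹ * u * ↑u⁻¹ := by rw [mul_assoc, u.mul_inv, mul_one]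
    _ = (-α) • (↑u⁻¹ : A) := by
      rw [eq_neg_of_add_eq_zero_left h, neg_mul, smul_mul_assoc, one_mul, neg_smul]

theorem map_zpow_of_eigen (hd : ∀ x y : A, d (x * y) = d x * y + x * d y) {u : Aˣ} {α : R}
    (hu : d u = α • (u : A)) (n : ℤ) : d ↑(u ^ n) = (n * α) • (↑(u ^ n) : A) := by
  obtain ⟨m, rfl | rfl⟩ := n.eq_nat_or_neg
  · simpa using map_pow_of_eigen hd hu m
  · rw [zpow_neg, zpow_natCast, ← inv_pow, Units.val_pow_eq_pow_val,
      map_pow_of_eigen hd (map_inv_of_eigen hd hu)]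
    push_cast
    ring_nf

theorem map_zpow_mul_zpow_of_eigen (hd : ∀ x y : A, d (x * y) = d x * y + x * d y)
    {u v : Aˣ} {α β : R} (hu : d u = α • (u : A)) (hv : d v = β • (v : A)) (k l : ℤ) :
    d ↑(u ^ k * v ^ l) = (k * α + l * β) • (↑(u ^ k * v ^ l) : A) := by
  rw [Units.val_mul, map_mul_of_eigen hd (map_zpow_of_eigen hd hu k) (map_zpow_of_eigen hd hv l)]

end Leibniz

theorem Finsupp.map_linearCombination_of_eigen {ι R M : Type*} [CommSemiring R]
    [AddCommMonoid M] [Module R M] {d : M →ₗ[R] M} {e : ι → M} {g : ι → R}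
    (he : ∀ i, d (e i) = g i • e i) (f : ι →₀ R) :
    d (linearCombination R e f) = linearCombination R e (g • f) := by
  induction f using Finsupp.induction_linear with
  | zero => simp
  | add f₁ f₂ h₁ h₂ => rw [map_add, map_add, h₁, h₂, smul_add, map_add]
  | single i c =>
    have hsingle : g • single i c = single i (g i * c) := by
      ext j
      by_cases h : i = j <;> simp [coe_pointwise_smul, h]
    rw [hsingle, linearCombination_single, linearCombination_single, map_smul, he, smul_smul,
      mul_comm]

namespace NCTorus

open Finsupp

def symbol₁ (p : ℤ × ℤ) : ℂ := I * p.1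

def symbol₂ (p : ℤ × ℤ) : ℂ := I * p.2

theorem symbol_smul_eq_iff {a b : ℤ × ℤ →₀ ℂ} :
    symbol₁ • b = symbol₂ • a ↔ ∀ k l : ℤ, (k : ℂ) * b (k, l) = l * a (k, l) := by
  simp only [Finsupp.ext_iff, Prod.forall, coe_pointwise_smul, smul_eq_mul, Pi.mul_apply,
    symbol₁, symbol₂, mul_assoc, mul_right_inj' I_ne_zero]

theorem exists_primitive_of_closed {a b : ℤ × ℤ →₀ ℂ} (h : symbol₁ • b = symbol₂ • a) :
    ∃ c : ℤ × ℤ →₀ ℂ, a = single 0 (a 0) + symbol₁ • c ∧ b = single 0 (b 0) + symbol₂ • c := by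
  refine ⟨(fun p => if p.1 = 0 then 0 else (symbol₁ p)⁻¹) • a +
    (fun p => if p.1 = 0 then (symbol₂ p)⁻¹ else 0) • b, ?_, ?_⟩ <;> ext ⟨k, l⟩ <;>
    have hkl := symbol_smul_eq_iff.mp h k l <;>
    rcases eq_or_ne k 0 with rfl | hk <;> rcases eq_or_ne l 0 with rfl | hl <;>
    simp_all [coe_pointwise_smul, symbol₁, symbol₂, Prod.ext_iff, Prod.mk_zero_zero]
  all_goals field_simp; rw [I_sq]
  · ring
  · ring
  · ring
  · linear_combination hkl

end NCTorus

open NCTorus Finsupp in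
theorem stmt_14_general {A : Type*} [Ring A] [Algebra ℂ A]
    (U V : Aˣ)
    (d1 d2 : A →ₗ[ℂ] A)
    (hd1 : ∀ x y : A, d1 (x * y) = d1 x * y + x * d1 y)
    (hd2 : ∀ x y : A, d2 (x * y) = d2 x * y + x * d2 y)
    (hd1U : d1 (U : A) = Complex.I • (U : A)) (hd1V : d1 (V : A) = 0)
    (hd2U : d2 (U : A) = 0) (hd2V : d2 (V : A) = Complex.I • (V : A))
    (Φ : (ℤ × ℤ →₀ ℂ) →ₗ[ℂ] A)
    (hΦ : ∀ f : ℤ × ℤ →₀ ℂ, Φ f = f.sum fun p c => c • ((U ^ p.1 * V ^ p.2 : Aˣ) : A))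
    (hΦinj : Function.Injective Φ)
    (a b : ℤ × ℤ →₀ ℂ) :
    (d1 (Φ b) = d2 (Φ a) ↔ ∀ k l : ℤ, (k : ℂ) * b (k, l) = (l : ℂ) * a (k, l)) ∧
    (d1 (Φ b) = d2 (Φ a) →
      ∃! p : ℂ × ℂ, ∃ c : ℤ × ℤ →₀ ℂ,
        Φ a = p.1 • (1 : A) + d1 (Φ c) ∧ Φ b = p.2 • (1 : A) + d2 (Φ c)) := by
  have hΦ' : Φ = linearCombination ℂ fun p : ℤ × ℤ => ((U ^ p.1 * V ^ p.2 : Aˣ) : A) :=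
    LinearMap.ext hΦ
  have hd1Φ (f : ℤ × ℤ →₀ ℂ) : d1 (Φ f) = Φ (symbol₁ • f) := by
    rw [hΦ', map_linearCombination_of_eigen fun p => ?_]
    rw [map_zpow_mul_zpow_of_eigen hd1 hd1U (v := V) (β := 0) (by simpa using hd1V)]
    simp [symbol₁, mul_comm]
  have hd2Φ (f : ℤ × ℤ →₀ ℂ) : d2 (Φ f) = Φ (symbol₂ • f) := by
    rw [hΦ', map_linearCombination_of_eigen fun p => ?_]
    rw [map_zpow_mul_zpow_of_eigen hd2 (α := 0) (by simpa using hd2U) hd2V]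
    simp [symbol₂, mul_comm]
  have hΦ_single (x : ℂ) : Φ (single 0 x) = x • 1 := by simp [hΦ']
  have closed_iff : d1 (Φ b) = d2 (Φ a) ↔ symbol₁ • b = symbol₂ • a := by
    rw [hd1Φ, hd2Φ, hΦinj.eq_iff]
  refine ⟨closed_iff.trans symbol_smul_eq_iff, fun hclosed => ?_⟩
  obtain ⟨c, ha, hb⟩ := exists_primitive_of_closed (closed_iff.mp hclosed)
  refine ⟨(a 0, b 0), ⟨c, ?_, ?_⟩, ?_⟩
  · conv_lhs => rw [ha]
    rw [map_add, hΦ_single, hd1Φ]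
  · conv_lhs => rw [hb]
    rw [map_add, hΦ_single, hd2Φ]
  · rintro ⟨x, y⟩ ⟨c', ha', hb'⟩
    rw [← hΦ_single, hd1Φ, ← map_add] at ha'
    rw [← hΦ_single, hd2Φ, ← map_add] at hb'
    simp [hΦinj ha', hΦinj hb', symbol₁, symbol₂]

/-- in the noncommutative torus (θ irrational), a 1-form
`ρ = aω + bη` with `a = Σ a_{kl}UᵏVˡ`, `b = Σ b_{kl}UᵏVˡ` is closed iff
`k·b_{kl} = l·a_{kl}` for all `k, l`, and every closed 1-form is, modulo exact
forms, uniquely of the shape `λω + μη` with `λ, μ ∈ ℂ` (so `H¹ ≅ ℂ²`). -/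
theorem stmt_14 {A : Type*} [Ring A] [Algebra ℂ A] (θ : ℝ) (hθ : Irrational θ)
    (q : ℂ) (hq : q = Complex.exp (2 * Real.pi * Complex.I * θ))
    (U V : Aˣ) (hUV : (V : A) * U = q • ((U : A) * V))
    (d1 d2 : A →ₗ[ℂ] A)
    (hd1 : ∀ x y : A, d1 (x * y) = d1 x * y + x * d1 y)
    (hd2 : ∀ x y : A, d2 (x * y) = d2 x * y + x * d2 y)
    (hcomm : ∀ x : A, d1 (d2 x) = d2 (d1 x))
    (hd1U : d1 (U : A) = Complex.I • (U : A)) (hd1V : d1 (V : A) = 0)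
    (hd2U : d2 (U : A) = 0) (hd2V : d2 (V : A) = Complex.I • (V : A))
    (Φ : (ℤ × ℤ →₀ ℂ) →ₗ[ℂ] A)
    (hΦ : ∀ f : ℤ × ℤ →₀ ℂ, Φ f = f.sum fun p c => c • ((U ^ p.1 * V ^ p.2 : Aˣ) : A))
    (hΦinj : Function.Injective Φ)
    (a b : ℤ × ℤ →₀ ℂ) :
    (d1 (Φ b) = d2 (Φ a) ↔ ∀ k l : ℤ, (k : ℂ) * b (k, l) = (l : ℂ) * a (k, l)) ∧
    (d1 (Φ b) = d2 (Φ a) →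
      ∃! p : ℂ × ℂ, ∃ c : ℤ × ℤ →₀ ℂ,
        Φ a = p.1 • (1 : A) + d1 (Φ c) ∧ Φ b = p.2 • (1 : A) + d2 (Φ c)) :=
  stmt_14_general U V d1 d2 hd1 hd2 hd1U hd1V hd2U hd2V Φ hΦ hΦinj a b
end

section
/- Let M be a central *-bimodule over a *-algebra A and g a Lie algebra of derivations closed under *. If ∇ : g × M → M is a left *-connection (a left connection satisfying (∇_δ m)* = ∇_{δ*} m*), then ∇ is also a right connection, i.e., ∇_δ(ma) = (∇_δ m)a + m(δa) for all m ∈ M, a ∈ A, δ ∈ g. -/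
open MulOpposite

/-- a left `*`-connection on a central `*`-bimodule is also a
right connection. -/
theorem stmt_16 {A M : Type*} [Ring A] [StarRing A] [AddCommGroup M]
    [Module A M] [Module Aᵐᵒᵖ M] [SMulCommClass A Aᵐᵒᵖ M]
    (s : M → M)
    (hs_add : ∀ m m' : M, s (m + m') = s m + s m')
    (hs_inv : ∀ m : M, s (s m) = m)
    (hs_left : ∀ (a : A) (m : M), s (a • m) = op (star a) • s m)
    (hs_right : ∀ (a : A) (m : M), s (op a • m) = star a • s m)
    (hcentral : ∀ z : A, z ∈ Set.center A → ∀ m : M, z • m = op z • m)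
    (δ δs : A → A)
    (hδ : ∀ x y : A, δ (x * y) = δ x * y + x * δ y)
    (hδs : ∀ x : A, δs x = star (δ (star x)))
    (nab nabs : M → M)
    (hadd : ∀ m m' : M, nab (m + m') = nab m + nab m')
    (hadds : ∀ m m' : M, nabs (m + m') = nabs m + nabs m')
    (hleib : ∀ (a : A) (m : M), nab (a • m) = a • nab m + δ a • m)
    (hleibs : ∀ (a : A) (m : M), nabs (a • m) = a • nabs m + δs a • m)
    (hstar : ∀ m : M, s (nab m) = nabs (s m))
    (hstar' : ∀ m : M, s (nabs m) = nab (s m)) :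
    ∀ (a : A) (m : M), nab (op a • m) = op a • nab m + op (δ a) • m := by
  intro a m
  have key : op a • m = s (star a • s m) := by
    rw [hs_left, star_star, hs_inv]
  rw [key, ← hstar' (star a • s m), hleibs, hs_add, hs_left, hs_left, star_star,
    hstar', hs_inv, hδs, star_star, star_star]
end
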